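/- If a sequent Γ ⇒ Δ is provable in Grz_∞, then Γ ⇒ Δ is provable in Grz_Seq. -/

import Mathlib

/-- Modal formulas built from ⊥ and propositional variables using → and □. -/
inductive Fml : Type
  | bot : Fml
  | var : ℕ → Fml
  | imp : Fml → Fml → Fml
  | box : Fml → Fml
deriving DecidableEq

/-- A sequent `Γ ⇒ Δ`: a pair of finite multisets of formulas. -/
abbrev Sequent : Type := Multiset Fml × Multiset Fml

/-- The sequent calculus `Grz_Seq` (with the cut rule available when the
Boolean parameter is `true`, i.e. `GrzSeq true` is `Grz_Seq + cut` and
`GrzSeq false` is `Grz_Seq`). -/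
inductive GrzSeq : Bool → Sequent → Prop
  | ax (c : Bool) (Γ Δ : Multiset Fml) (A : Fml) :
      GrzSeq c (A ::ₘ Γ, A ::ₘ Δ)
  | axBot (c : Bool) (Γ Δ : Multiset Fml) :
      GrzSeq c (Fml.bot ::ₘ Γ, Δ)
  | impL {c : Bool} {Γ Δ : Multiset Fml} {A B : Fml} :
      GrzSeq c (B ::ₘ Γ, Δ) → GrzSeq c (Γ, A ::ₘ Δ) →
      GrzSeq c (Fml.imp A B ::ₘ Γ, Δ)
  | impR {c : Bool} {Γ Δ : Multiset Fml} {A B : Fml} :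
      GrzSeq c (A ::ₘ Γ, B ::ₘ Δ) → GrzSeq c (Γ, Fml.imp A B ::ₘ Δ)
  | refl {c : Bool} {Γ Δ : Multiset Fml} {B : Fml} :
      GrzSeq c (B ::ₘ Fml.box B ::ₘ Γ, Δ) → GrzSeq c (Fml.box B ::ₘ Γ, Δ)
  | boxGrz {c : Bool} (Γ : Multiset Fml) {Φ : Multiset Fml} {A : Fml} (Δ : Multiset Fml) :
      GrzSeq c (Fml.box (Fml.imp A (Fml.box A)) ::ₘ Φ.map Fml.box, ({A} : Multiset Fml)) →
      GrzSeq c (Γ + Φ.map Fml.box, Fml.box A ::ₘ Δ)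
  | cut {Γ Δ : Multiset Fml} {A : Fml} :
      GrzSeq true (Γ, A ::ₘ Δ) → GrzSeq true (A ::ₘ Γ, Δ) → GrzSeq true (Γ, Δ)

/-- Tags for the inference rules of `Grz_∞ (+ cut)`. -/
inductive RuleTag : Type
  | ax | axBot | impL | impR | refl | box | cut
deriving DecidableEq

/-- Local correctness of a rule application in `Grz_∞` (cut allowed when the
Boolean parameter is `true`): it relates the conclusion sequent, the rule tag
and the (optional) first and second premises.  For the rule `(□)`, the second
premise is its right premise. -/
inductive Rules : Bool → Sequent → RuleTag → Option Sequent → Option Sequent → Prop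
  | ax (c : Bool) (Γ Δ : Multiset Fml) (p : ℕ) :
      Rules c (Fml.var p ::ₘ Γ, Fml.var p ::ₘ Δ) RuleTag.ax none none
  | axBot (c : Bool) (Γ Δ : Multiset Fml) :
      Rules c (Fml.bot ::ₘ Γ, Δ) RuleTag.axBot none none
  | impL (c : Bool) (Γ Δ : Multiset Fml) (A B : Fml) :
      Rules c (Fml.imp A B ::ₘ Γ, Δ) RuleTag.impL
        (some (B ::ₘ Γ, Δ)) (some (Γ, A ::ₘ Δ))
  | impR (c : Bool) (Γ Δ : Multiset Fml) (A B : Fml) :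
      Rules c (Γ, Fml.imp A B ::ₘ Δ) RuleTag.impR
        (some (A ::ₘ Γ, B ::ₘ Δ)) none
  | refl (c : Bool) (Γ Δ : Multiset Fml) (B : Fml) :
      Rules c (Fml.box B ::ₘ Γ, Δ) RuleTag.refl
        (some (B ::ₘ Fml.box B ::ₘ Γ, Δ)) none
  | box (c : Bool) (Γ Φ Δ : Multiset Fml) (A : Fml) :
      Rules c (Γ + Φ.map Fml.box, Fml.box A ::ₘ Δ) RuleTag.box
        (some (Γ + Φ.map Fml.box, A ::ₘ Δ)) (some (Φ.map Fml.box, ({A} : Multiset Fml)))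
  | cut (Γ Δ : Multiset Fml) (A : Fml) :
      Rules true (Γ, Δ) RuleTag.cut (some (Γ, A ::ₘ Δ)) (some (A ::ₘ Γ, Δ))

/-- An ∞-proof in `Grz_∞` (`c = false`) or `Grz_∞ + cut` (`c = true`): a
possibly infinite tree (nodes are adressed by lists of Booleans, `false`
pointing to the first premise and `true` to the second premise) of sequents
together with applied rules, constructed according to the rules, whose leaves
are initial sequents, and in which every infinite branch passes through a
right premise of the rule `(□)` infinitely many times. -/
structure InfProof (c : Bool) : Type where
  node : List Bool → Option (Sequent × RuleTag)
  root_isSome : (node []).isSome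
  closed : ∀ (p : List Bool) (i : Bool), node p = none → node (p ++ [i]) = none
  correct : ∀ (p : List Bool) (s : Sequent) (r : RuleTag), node p = some (s, r) →
    Rules c s r ((node (p ++ [false])).map Prod.fst) ((node (p ++ [true])).map Prod.fst)
  guard : ∀ f : ℕ → Bool, (∀ n : ℕ, (node ((List.range n).map f)).isSome) →
    ∀ N : ℕ, ∃ n : ℕ, N ≤ n ∧ f n = true ∧
      (node ((List.range n).map f)).map Prod.snd = some RuleTag.box

/-- The sequent at the root of an ∞-proof. -/
def rootSeq {c : Bool} (π : InfProof c) : Sequent :=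
  ((π.node []).getD (((0 : Multiset Fml), (0 : Multiset Fml)), RuleTag.ax)).1

/-- A sequent is provable in `Grz_∞ (+ cut)` if it has an ∞-proof with that
sequent at the root. -/
def ProvableInf (c : Bool) (s : Sequent) : Prop := ∃ π : InfProof c, rootSeq π = s

/-- The number of right premises of the rule `(□)` strictly below the node
addressed by `p` in the ∞-proof `π`. -/
def countBR {c : Bool} (π : InfProof c) (p : List Bool) : ℕ :=
  ((List.range p.length).filter fun i =>
    p.getD i false && decide ((π.node (p.take i)).map Prod.snd = some RuleTag.box)).length

/-- `Frag n π τ` means that the `n`-fragments of `π` and `τ` coincide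
(`π ∼_n τ`): the trees agree on every node lying strictly before the `n`-th
right premise of `(□)` on its branch. -/
def Frag {c : Bool} (n : ℕ) (π τ : InfProof c) : Prop :=
  ∀ p : List Bool, countBR π p < n → π.node p = τ.node p

/-- The local pheight `|π|`: the length of the longest branch in the main
(1-)fragment of `π`. -/
noncomputable def pheight {c : Bool} (π : InfProof c) : ℕ :=
  sSup { n : ℕ | ∃ p : List Bool, p.length = n ∧ (π.node p).isSome ∧ countBR π p = 0 }

/-- Membership in `P_n`: the ∞-proof contains no applications of the cut rule
in its `n`-fragment. -/
def CutFreeIn {c : Bool} (n : ℕ) (π : InfProof c) : Prop :=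
  ∀ p : List Bool, countBR π p < n → (π.node p).map Prod.snd ≠ some RuleTag.cut

/-- A non-expansive mapping on ∞-proofs. -/
def NonExp {c : Bool} (u : InfProof c → InfProof c) : Prop :=
  ∀ (n : ℕ) (π π' : InfProof c), Frag n π π' → Frag n (u π) (u π')

/-- An adequate mapping on ∞-proofs: it preserves each `P_n`. -/
def Adequate {c : Bool} (u : InfProof c → InfProof c) : Prop :=
  ∀ (n : ℕ) (π : InfProof c), CutFreeIn n π → CutFreeIn n (u π)

/-- Cast along multiset equalities. -/
lemma GrzSeq.gcast {c : Bool} {Γ Δ Γ' Δ' : Multiset Fml} (h : GrzSeq c (Γ, Δ))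
    (h1 : Γ = Γ') (h2 : Δ = Δ') : GrzSeq c (Γ', Δ') := h1 ▸ h2 ▸ h

/-- Weakening is admissible. -/
lemma GrzSeq.weak : ∀ {c : Bool} {s : Sequent}, GrzSeq c s → ∀ (Γ' Δ' : Multiset Fml),
    GrzSeq c (s.1 + Γ', s.2 + Δ') := by
  intro c s h
  induction h with
  | ax c Γ Δ A =>
      intro Γ' Δ'; dsimp only; simp only [Multiset.cons_add]; exact GrzSeq.ax c _ _ A
  | axBot c Γ Δ =>
      intro Γ' Δ'; dsimp only; simp only [Multiset.cons_add]; exact GrzSeq.axBot c _ _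
  | impL h1 h2 ih1 ih2 =>
      intro Γ' Δ'; dsimp only; simp only [Multiset.cons_add]
      exact GrzSeq.impL (by simpa [Multiset.cons_add] using ih1 Γ' Δ')
        (by simpa [Multiset.cons_add] using ih2 Γ' Δ')
  | impR h1 ih1 =>
      intro Γ' Δ'; dsimp only; simp only [Multiset.cons_add]
      exact GrzSeq.impR (by simpa [Multiset.cons_add] using ih1 Γ' Δ')
  | refl h1 ih1 =>
      intro Γ' Δ'; dsimp only; simp only [Multiset.cons_add]
      exact GrzSeq.refl (by simpa [Multiset.cons_add] using ih1 Γ' Δ')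
  | boxGrz Γ Δ h1 _ih =>
      intro Γ' Δ'; dsimp only
      exact (GrzSeq.boxGrz (Γ + Γ') (Δ + Δ') h1).gcast (by abel) (by simp [Multiset.cons_add])
  | cut h1 h2 ih1 ih2 =>
      intro Γ' Δ'; dsimp only
      exact GrzSeq.cut (by simpa [Multiset.cons_add] using ih1 Γ' Δ')
        (by simpa [Multiset.cons_add] using ih2 Γ' Δ')

/-- Subformula closure of a formula. -/
def Fml.sub : Fml → Finset Fml
  | .bot => {.bot}
  | .var n => {.var n}
  | .imp A B => insert (.imp A B) (A.sub ∪ B.sub)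
  | .box A => insert (.box A) A.sub

lemma Fml.mem_sub_self : ∀ A : Fml, A ∈ A.sub := by
  intro A; cases A <;> simp [Fml.sub]

lemma Fml.sub_sub : ∀ A B : Fml, B ∈ A.sub → B.sub ⊆ A.sub := by
  intro A
  induction A with
  | bot => intro B hB; simp [Fml.sub] at hB; subst hB; simp [Fml.sub]
  | var n => intro B hB; simp [Fml.sub] at hB; subst hB; simp [Fml.sub]
  | imp A B ihA ihB =>
      intro C hC
      simp only [Fml.sub, Finset.mem_insert, Finset.mem_union] at hC
      rcases hC with h | h | h
      · subst h; exact fun x hx => hx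
      · exact fun x hx => by
          simp only [Fml.sub, Finset.mem_insert, Finset.mem_union]
          exact Or.inr (Or.inl (ihA C h hx))
      · exact fun x hx => by
          simp only [Fml.sub, Finset.mem_insert, Finset.mem_union]
          exact Or.inr (Or.inr (ihB C h hx))
  | box A ihA =>
      intro C hC
      simp only [Fml.sub, Finset.mem_insert] at hC
      rcases hC with h | h
      · subst h; exact fun x hx => hx
      · exact fun x hx => by
          simp only [Fml.sub, Finset.mem_insert]
          exact Or.inr (ihA C h hx)

/-- Well-foundedness from no infinite descending sequences. -/
lemma wf_of_no_descending {α : Type*} {r : α → α → Prop}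
    (h : ∀ f : ℕ → α, ¬ ∀ n, r (f (n+1)) (f n)) : WellFounded r := by
  constructor
  intro x
  by_contra hx
  have key : ∀ y : {a // ¬Acc r a}, ∃ z : {a // ¬Acc r a}, r z.1 y.1 := by
    rintro ⟨y, hy⟩
    obtain ⟨b, hb, hr⟩ := exists_not_acc_lt_of_not_acc hy
    exact ⟨⟨b, hb⟩, hr⟩
  choose f hf using key
  exact h (fun n => (f^[n] ⟨x, hx⟩).1)
    (fun n => by simpa [Function.iterate_succ_apply'] using hf (f^[n] ⟨x, hx⟩))


section InfMachinery

variable {c : Bool} (π : InfProof c)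

/-- If a node is defined, so are all its ancestors. -/
lemma node_isSome_prefix : ∀ (q p : List Bool), (π.node (p ++ q)).isSome → (π.node p).isSome := by
  intro q
  induction q using List.reverseRecOn with
  | nil => intro p h; simpa using h
  | append_singleton q i ih =>
      intro p h
      apply ih
      by_contra hn
      rw [Option.not_isSome_iff_eq_none] at hn
      have h2 := π.closed (p ++ q) i hn
      rw [← List.append_assoc] at h
      rw [h2] at h
      simp at h

/-- One-step child relation avoiding right premises of the box rule. -/
def Step (q p : List Bool) : Prop :=
  (π.node q).isSome ∧ ∃ i : Bool, q = p ++ [i] ∧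
    (i = true → (π.node p).map Prod.snd ≠ some RuleTag.box)

lemma step_wf : WellFounded (Step π) := by
  apply wf_of_no_descending
  intro f hf
  have hstep : ∀ n, ∃ i : Bool, f (n+1) = f n ++ [i] := fun n => by
    obtain ⟨_, i, hi, _⟩ := hf n; exact ⟨i, hi⟩
  have hsome : ∀ n, (π.node (f n)).isSome := by
    intro n
    cases n with
    | zero =>
        obtain ⟨i, hi⟩ := hstep 0
        have := (hf 0).1
        rw [hi] at this
        exact node_isSome_prefix π [i] (f 0) this
    | succ n => exact (hf n).1
  set L := (f 0).length with hL
  have hlen : ∀ n, (f n).length = L + n := by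
    intro n; induction n with
    | zero => simp [hL]
    | succ n ih => obtain ⟨i, hi⟩ := hstep n; simp [hi, ih]; omega
  -- the infinite branch
  set g : ℕ → Bool := fun n =>
    if n < L then (f 0).getD n false else (f (n - L + 1)).getD (f (n - L)).length false with hg
  have hpref : ∀ n, (List.range (L + n)).map g = f n := by
    intro n
    induction n with
    | zero =>
        apply List.ext_getElem
        · simp [hL]
        · intro k h1 h2
          simp only [List.getElem_map, List.getElem_range]
          have hk : k < L := by simpa using h1
          simp [hg, hk, List.getD_eq_getElem?_getD, List.getElem?_eq_getElem h2]
    | succ n ih =>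
        obtain ⟨i, hi⟩ := hstep n
        have : L + (n+1) = (L + n) + 1 := by omega
        rw [this, List.range_succ, List.map_append, ih]
        have hgv : g (L + n) = i := by
          have h1 : ¬ (L + n < L) := by omega
          have h2 : L + n - L = n := by omega
          simp only [hg, h1, if_false, h2, hi]
          simp [List.getD_eq_getElem?_getD, List.getElem?_concat_length]
        simp [hgv, hi]
  have hdef : ∀ n, (π.node ((List.range n).map g)).isSome := by
    intro n
    rcases le_or_gt L n with h | h
    · obtain ⟨m, rfl⟩ := Nat.exists_eq_add_of_le h
      rw [hpref m]; exact hsome m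
    · -- prefix of f 0
      have h0 : (List.range L).map g = f 0 := by
        have := hpref 0; rwa [Nat.add_zero] at this
      have hsplit : (List.range n).map g ++ ((List.range L).map g).drop n
          = (List.range L).map g := by
        conv_rhs => rw [← List.take_append_drop n ((List.range L).map g)]
        congr 1
        rw [← List.map_take, List.take_range, min_eq_left h.le]
      exact node_isSome_prefix π (((List.range L).map g).drop n) _
        (by rw [hsplit, h0]; exact hsome 0)
  obtain ⟨n, hn, hgt, hbox⟩ := π.guard g hdef L
  obtain ⟨m, rfl⟩ := Nat.exists_eq_add_of_le hn
  rw [hpref m] at hbox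
  obtain ⟨_, i, hi, hnb⟩ := hf m
  have hgi : g (L + m) = i := by
    have h1 : ¬ (L + m < L) := by omega
    have h2 : L + m - L = m := by omega
    simp only [hg, h1, if_false, h2, hi]
    simp [List.getD_eq_getElem?_getD, List.getElem?_concat_length]
  rw [hgi] at hgt
  exact hnb hgt hbox

end InfMachinery


/-- The "history" multiset `□(B→□B)` for `B ∈ Θ`. -/
def HH (Θ : Finset Fml) : Multiset Fml :=
  Θ.val.map (fun B => Fml.box (Fml.imp B (Fml.box B)))

lemma main_translation (π : InfProof false) (S : Finset Fml)
    (himp : ∀ A B : Fml, Fml.imp A B ∈ S → A ∈ S ∧ B ∈ S)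
    (hboxS : ∀ A : Fml, Fml.box A ∈ S → A ∈ S) :
    ∀ (k : ℕ) (Θ : Finset Fml), (S \ Θ).card ≤ k →
      ∀ p : List Bool, ∀ (s : Sequent) (r : RuleTag), π.node p = some (s, r) →
        (∀ A ∈ s.1, A ∈ S) → (∀ A ∈ s.2, A ∈ S) →
        GrzSeq false (HH Θ + s.1, s.2) := by
  intro k
  induction k using Nat.strong_induction_on with
  | _ k ihk =>
  intro Θ hcard
  refine fun p => (step_wf π).induction
    (C := fun p => ∀ (s : Sequent) (r : RuleTag), π.node p = some (s, r) →
      (∀ A ∈ s.1, A ∈ S) → (∀ A ∈ s.2, A ∈ S) → GrzSeq false (HH Θ + s.1, s.2)) p ?_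
  intro p ihp s r hnode hS1 hS2
  have hR := π.correct p s r hnode
  generalize hq1 : (π.node (p ++ [false])).map Prod.fst = o1 at hR
  generalize hq2 : (π.node (p ++ [true])).map Prod.fst = o2 at hR
  cases hR with
  | ax c Γ Δ q =>
      exact (GrzSeq.ax false (HH Θ + Γ) Δ (.var q)).gcast
        (by simp only [← Multiset.singleton_add]; abel) rfl
  | axBot c Γ Δ =>
      exact (GrzSeq.axBot false (HH Θ + Γ) Δ).gcast
        (by simp only [← Multiset.singleton_add]; abel) rfl
  | impL c Γ Δ A B =>
      obtain ⟨y1, hn1, hy1⟩ := Option.map_eq_some_iff.mp hq1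
      obtain ⟨y2, hn2, hy2⟩ := Option.map_eq_some_iff.mp hq2
      obtain ⟨hA, hB⟩ := himp A B (hS1 _ (Multiset.mem_cons_self _ _))
      have step1 : Step π (p ++ [false]) p := ⟨by simp [hn1], false, rfl, by simp⟩
      have step2 : Step π (p ++ [true]) p := ⟨by simp [hn2], true, rfl, by simp [hnode]⟩
      have G1 := ihp _ step1 (B ::ₘ Γ, Δ) y1.2 (by rw [← hy1, hn1])
        (by intro x hx
            rcases Multiset.mem_cons.mp hx with h | h
            · subst h; exact hB
            · exact hS1 _ (Multiset.mem_cons_of_mem h))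
        (fun x hx => hS2 x hx)
      have G2 := ihp _ step2 (Γ, A ::ₘ Δ) y2.2 (by rw [← hy2, hn2])
        (fun x hx => hS1 _ (Multiset.mem_cons_of_mem hx))
        (by intro x hx
            rcases Multiset.mem_cons.mp hx with h | h
            · subst h; exact hA
            · exact hS2 _ h)
      exact (GrzSeq.impL
          (G1.gcast (by simp only [← Multiset.singleton_add]; abel) rfl)
          (G2.gcast rfl rfl)).gcast
        (by simp only [← Multiset.singleton_add]; abel) rfl
  | impR c Γ Δ A B =>
      obtain ⟨y1, hn1, hy1⟩ := Option.map_eq_some_iff.mp hq1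
      obtain ⟨hA, hB⟩ := himp A B (hS2 _ (Multiset.mem_cons_self _ _))
      have step1 : Step π (p ++ [false]) p := ⟨by simp [hn1], false, rfl, by simp⟩
      have G1 := ihp _ step1 (A ::ₘ Γ, B ::ₘ Δ) y1.2 (by rw [← hy1, hn1])
        (by intro x hx
            rcases Multiset.mem_cons.mp hx with h | h
            · subst h; exact hA
            · exact hS1 _ h)
        (by intro x hx
            rcases Multiset.mem_cons.mp hx with h | h
            · subst h; exact hB
            · exact hS2 _ (Multiset.mem_cons_of_mem h))
      exact GrzSeq.impR (G1.gcast (by simp only [← Multiset.singleton_add]; abel) rfl)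
  | refl c Γ Δ B =>
      obtain ⟨y1, hn1, hy1⟩ := Option.map_eq_some_iff.mp hq1
      have hB : B ∈ S := hboxS B (hS1 _ (Multiset.mem_cons_self _ _))
      have step1 : Step π (p ++ [false]) p := ⟨by simp [hn1], false, rfl, by simp⟩
      have G1 := ihp _ step1 (B ::ₘ Fml.box B ::ₘ Γ, Δ) y1.2 (by rw [← hy1, hn1])
        (by intro x hx
            rcases Multiset.mem_cons.mp hx with h | h
            · subst h; exact hB
            · exact hS1 _ h)
        (fun x hx => hS2 x hx)
      exact (GrzSeq.refl (Γ := HH Θ + Γ)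
          (G1.gcast (by simp only [← Multiset.singleton_add]; abel) rfl)).gcast
        (by simp only [← Multiset.singleton_add]; abel) rfl
  | box c Γ Φ Δ A =>
      obtain ⟨y1, hn1, hy1⟩ := Option.map_eq_some_iff.mp hq1
      obtain ⟨y2, hn2, hy2⟩ := Option.map_eq_some_iff.mp hq2
      have hA : A ∈ S := hboxS A (hS2 _ (Multiset.mem_cons_self _ _))
      by_cases hmem : A ∈ Θ
      · -- the diagonal formula for `A` is already in the history
        have step1 : Step π (p ++ [false]) p := ⟨by simp [hn1], false, rfl, by simp⟩
        have G1 := ihp _ step1 (Γ + Φ.map Fml.box, A ::ₘ Δ) y1.2 (by rw [← hy1, hn1])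
          (fun x hx => hS1 x hx)
          (by intro x hx
              rcases Multiset.mem_cons.mp hx with h | h
              · subst h; exact hA
              · exact hS2 _ (Multiset.mem_cons_of_mem h))
        have G1w := G1.weak 0 {Fml.box A}
        have hsplit : HH Θ = Fml.box (Fml.imp A (Fml.box A)) ::ₘ
            (Θ.val.erase A).map (fun B => Fml.box (Fml.imp B (Fml.box B))) := by
          conv_lhs => rw [HH, ← Multiset.cons_erase (show A ∈ Θ.val from hmem)]
          rw [Multiset.map_cons]
        refine (GrzSeq.refl (B := Fml.imp A (Fml.box A))
            (Γ := (Θ.val.erase A).map (fun B => Fml.box (Fml.imp B (Fml.box B)))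
              + (Γ + Φ.map Fml.box)) (Δ := Fml.box A ::ₘ Δ) ?_).gcast
          (by rw [hsplit]; simp only [← Multiset.singleton_add]; abel) rfl
        refine GrzSeq.impL ?_ ?_
        · exact GrzSeq.ax false _ Δ (Fml.box A)
        · exact G1w.gcast
            (by rw [hsplit]; simp only [← Multiset.singleton_add]; abel)
            (by simp only [← Multiset.singleton_add]; abel)
      · -- extend the history with `A`
        have hlt : (S \ insert A Θ).card < k := by
          rw [Finset.sdiff_insert]
          exact lt_of_lt_of_le
            (Finset.card_erase_lt_of_mem (Finset.mem_sdiff.mpr ⟨hA, hmem⟩)) hcard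
        have G2 := ihk _ hlt (insert A Θ) le_rfl (p ++ [true]) (Φ.map Fml.box, {A}) y2.2
          (by rw [← hy2, hn2])
          (fun x hx => hS1 x (Multiset.mem_add.mpr (Or.inr hx)))
          (by intro x hx
              rw [Multiset.mem_singleton] at hx
              subst hx; exact hA)
        have hins : HH (insert A Θ) = Fml.box (Fml.imp A (Fml.box A)) ::ₘ HH Θ := by
          rw [HH, HH, Finset.insert_val_of_notMem hmem, Multiset.map_cons]
        refine (GrzSeq.boxGrz (c := false) Γ
            (Φ := Φ + Θ.val.map (fun B => Fml.imp B (Fml.box B))) (A := A) Δ ?_).gcast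
          ?_ rfl
        · refine G2.gcast ?_ rfl
          rw [hins]
          simp only [HH, Multiset.map_add, Multiset.map_map, Function.comp]
          simp only [← Multiset.singleton_add]; abel
        · simp only [HH, Multiset.map_add, Multiset.map_map, Function.comp]
          abel

/-- If a sequent is provable in `Grz_∞`, then it is provable in `Grz_Seq`. -/
theorem grzInf_to_grzSeq (s : Sequent) (h : ProvableInf false s) : GrzSeq false s := by
  obtain ⟨π, hroot⟩ := h
  obtain ⟨v, hv⟩ := Option.isSome_iff_exists.mp π.root_isSome
  have hs : v.1 = s := by rw [rootSeq, hv] at hroot; exact hroot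
  set S : Finset Fml := (s.1 + s.2).toFinset.biUnion Fml.sub with hS
  have hsubS : ∀ C : Fml, C ∈ S → C.sub ⊆ S := by
    intro C hC x hx
    obtain ⟨D, hD, hCD⟩ := Finset.mem_biUnion.mp hC
    exact Finset.mem_biUnion.mpr ⟨D, hD, Fml.sub_sub D C hCD hx⟩
  have himp : ∀ A B : Fml, Fml.imp A B ∈ S → A ∈ S ∧ B ∈ S := by
    intro A B hAB
    constructor
    · exact hsubS _ hAB (by
        simp only [Fml.sub, Finset.mem_insert, Finset.mem_union]
        exact Or.inr (Or.inl (Fml.mem_sub_self A)))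
    · exact hsubS _ hAB (by
        simp only [Fml.sub, Finset.mem_insert, Finset.mem_union]
        exact Or.inr (Or.inr (Fml.mem_sub_self B)))
  have hbox : ∀ A : Fml, Fml.box A ∈ S → A ∈ S := fun A hA =>
    hsubS _ hA (by
      simp only [Fml.sub, Finset.mem_insert]
      exact Or.inr (Fml.mem_sub_self A))
  have hroot1 : ∀ A ∈ s.1, A ∈ S := fun A hA =>
    Finset.mem_biUnion.mpr ⟨A, Multiset.mem_toFinset.mpr (Multiset.mem_add.mpr (Or.inl hA)),
      Fml.mem_sub_self A⟩
  have hroot2 : ∀ A ∈ s.2, A ∈ S := fun A hA =>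
    Finset.mem_biUnion.mpr ⟨A, Multiset.mem_toFinset.mpr (Multiset.mem_add.mpr (Or.inr hA)),
      Fml.mem_sub_self A⟩
  have := main_translation π S himp hbox (S \ ∅).card ∅ le_rfl [] s v.2
    (by rw [← hs, hv]) hroot1 hroot2
  exact this.gcast (by simp [HH]) rfl
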